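/- arXiv:0801.0313 — 4 statements merged into one kernel-verified Lean document; each statement's English description precedes it below -/
import Mathlib

section
/- Let Ω be a locally compact Hausdorff space and let (P_n) be a pseudo-finite sequence of prime ideals in C_0(Ω). Then ⋃_n P_n is a prime ideal in C_0(Ω). -/
/-!
Pseudo-finiteness makes the union closed under addition: two elements of the union lie together
in all but finitely many `P n`, hence in a common one. For properness pick `f n ∉ P n`; with small
weights `cₙ > 0` the function `g = ∑ cₙ |f n|²` lies in `C₀(Ω)`, hence in some `P m`, and
dominates `|f m|²`. Whenever `|f| ≤ C |g|`, the function `f² / g` (extended by `0`) is again in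
`C₀(Ω)`, so `f² ∈ g · C₀(Ω)`; hence `(f m)⁴ ∈ P m` and primality gives `f m ∈ P m`.
-/
open ZeroAtInfty

/-- `I` is an ideal of a non-unital commutative ring (as a set). -/
def IsIdeal {A : Type*} [NonUnitalCommRing A] (I : Set A) : Prop :=
  (0 : A) ∈ I ∧ (∀ a ∈ I, ∀ b ∈ I, a + b ∈ I) ∧ (∀ a ∈ I, -a ∈ I) ∧
    ∀ a ∈ I, ∀ b : A, a * b ∈ I

/-- `I` is a prime ideal of a non-unital commutative ring: a proper ideal such
that `a * b ∈ I` implies `a ∈ I` or `b ∈ I`. -/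
def IsPrimeIdeal {A : Type*} [NonUnitalCommRing A] (I : Set A) : Prop :=
  IsIdeal I ∧ I ≠ Set.univ ∧ ∀ a b : A, a * b ∈ I → a ∈ I ∨ b ∈ I

/-- A sequence of sets is pseudo-finite if every element of the union lies in
all but finitely many of the sets. -/
def PseudoFinite {A : Type*} [NonUnitalCommRing A] (P : ℕ → Set A) : Prop :=
  ∀ a : A, (∃ n, a ∈ P n) → {n | a ∉ P n}.Finite

open Filter Topology

section PseudoFiniteUnion

variable {A : Type*} [NonUnitalCommRing A]

lemma IsPrimeIdeal.mem_of_mul_self_mem {P : Set A} (hP : IsPrimeIdeal P) {a : A}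
    (ha : a * a ∈ P) : a ∈ P :=
  (hP.2.2 a a ha).elim id id

lemma isIdeal_iUnion_of_pseudoFinite {P : ℕ → Set A} (hP : ∀ n, IsIdeal (P n))
    (hpf : PseudoFinite P) : IsIdeal (⋃ n, P n) := by
  simp only [IsIdeal, Set.mem_iUnion]
  refine ⟨⟨0, (hP 0).1⟩, ?_, fun a ⟨n, ha⟩ => ⟨n, (hP n).2.2.1 a ha⟩,
    fun a ⟨n, ha⟩ b => ⟨n, (hP n).2.2.2 a ha b⟩⟩
  intro a ha b hb
  obtain ⟨n, han, hbn⟩ :=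
    ((eventually_cofinite.2 (hpf a ha)).and (eventually_cofinite.2 (hpf b hb))).exists
  exact ⟨n, (hP n).2.1 a han b hbn⟩

lemma isPrimeIdeal_iUnion_of_pseudoFinite {P : ℕ → Set A} (hP : ∀ n, IsPrimeIdeal (P n))
    (hpf : PseudoFinite P) (hne : ⋃ n, P n ≠ Set.univ) : IsPrimeIdeal (⋃ n, P n) := by
  refine ⟨isIdeal_iUnion_of_pseudoFinite (fun n => (hP n).1) hpf, hne, fun a b hab => ?_⟩
  obtain ⟨n, hn⟩ := Set.mem_iUnion.1 hab
  exact (hP n).2.2 a b hn |>.imp (Set.mem_iUnion_of_mem n) (Set.mem_iUnion_of_mem n)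

end PseudoFiniteUnion

lemma summable_geometric_two_smul_div_norm_add_one {E : Type*} [NormedAddCommGroup E]
    [NormedSpace ℝ E] [CompleteSpace E] (s : ℕ → E) :
    Summable fun n => ((1 / 2 : ℝ) ^ n / (‖s n‖ + 1)) • s n := by
  refine Summable.of_norm_bounded summable_geometric_two fun n => ?_
  rw [norm_smul, Real.norm_of_nonneg (by positivity), div_mul_eq_mul_div,
    div_le_iff₀ (by positivity)]
  gcongr
  linarith

namespace ZeroAtInftyContinuousMap

variable {Ω : Type*} [TopologicalSpace Ω]

lemma hasSum_apply {ι E : Type*} [NormedAddCommGroup E] {f : ι → C₀(Ω, E)} {g : C₀(Ω, E)}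
    (h : HasSum f g) (x : Ω) : HasSum (fun i => f i x) (g x) :=
  h.map (AddMonoidHom.mk' (fun f : C₀(Ω, E) => f x) fun _ _ => rfl)
    ((continuous_eval_const x).comp isometry_toBCF.continuous)

lemma exists_mul_self_eq_mul_of_norm_le {𝕜 : Type*} [NormedField 𝕜] {f g : C₀(Ω, 𝕜)} {C : ℝ}
    (hfg : ∀ x, ‖f x‖ ≤ C * ‖g x‖) : ∃ h : C₀(Ω, 𝕜), f * f = g * h := by
  have hf : ∀ x, g x = 0 → f x = 0 := fun x hx => norm_le_zero_iff.1 (by simpa [hx] using hfg x)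
  have hbound : ∀ x, ‖f x * f x / g x‖ ≤ C * ‖f x‖ := by
    intro x
    by_cases hx : g x = 0
    · simp [hx, hf x hx]
    · rw [norm_div, norm_mul, div_le_iff₀ (norm_pos_iff.2 hx), mul_right_comm]
      exact mul_le_mul_of_nonneg_right (hfg x) (norm_nonneg _)
  have hcont : Continuous fun x => f x * f x / g x := by
    refine continuous_iff_continuousAt.2 fun x => ?_
    by_cases hx : g x = 0
    · have hlim : Tendsto (fun y => C * ‖f y‖) (𝓝 x) (𝓝 0) := by
        simpa [hf x hx] using ((map_continuous f).norm.const_mul C).tendsto x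
      simpa [ContinuousAt, hx] using squeeze_zero_norm hbound hlim
    · exact (((map_continuous f).mul (map_continuous f)).continuousAt).div
        (map_continuous g).continuousAt hx
  have hzero : Tendsto (fun x => f x * f x / g x) (cocompact Ω) (𝓝 0) :=
    squeeze_zero_norm hbound (by simpa using (zero_at_infty f).norm.const_mul C)
  refine ⟨⟨⟨_, hcont⟩, hzero⟩, ext fun x => ?_⟩
  by_cases hx : g x = 0
  · simp [hx, hf x hx]
  · exact (mul_div_cancel₀ _ hx).symm

lemma mem_of_norm_le_mul_norm {𝕜 : Type*} [NormedField 𝕜] {P : Set C₀(Ω, 𝕜)}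
    (hP : IsPrimeIdeal P) {f g : C₀(Ω, 𝕜)} (hg : g ∈ P) {C : ℝ}
    (hfg : ∀ x, ‖f x‖ ≤ C * ‖g x‖) : f ∈ P := by
  obtain ⟨h, hfh⟩ := exists_mul_self_eq_mul_of_norm_le hfg
  exact hP.mem_of_mul_self_mem (hfh ▸ hP.1.2.2.2 g hg h)

variable {𝕜 : Type*} [RCLike 𝕜]

lemma exists_forall_norm_sq_le_mul_norm (f : ℕ → C₀(Ω, 𝕜)) :
    ∃ g : C₀(Ω, 𝕜), ∀ n, ∃ C : ℝ, ∀ x, ‖f n x‖ ^ 2 ≤ C * ‖g x‖ := by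
  set s : ℕ → C₀(Ω, 𝕜) := fun n => star (f n) * f n
  set c : ℕ → ℝ := fun n => (1 / 2 : ℝ) ^ n / (‖s n‖ + 1)
  have hc : ∀ n, 0 < c n := fun n => by positivity
  have hsum : Summable fun n => c n • s n := summable_geometric_two_smul_div_norm_add_one s
  set g := ∑' n, c n • s n
  have hterm : ∀ n x, (c n • s n) x = ((c n * ‖f n x‖ ^ 2 : ℝ) : 𝕜) := fun n x => by
    simp [s, RCLike.conj_mul, RCLike.real_smul_eq_coe_mul]
  refine ⟨g, fun n => ⟨(c n)⁻¹, fun x => ?_⟩⟩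
  have hre : HasSum (fun m => c m * ‖f m x‖ ^ 2) (RCLike.re (g x)) := by
    simpa only [Function.comp_def, RCLike.reCLM_apply, hterm, RCLike.ofReal_re] using
      (hasSum_apply hsum.hasSum x).mapL RCLike.reCLM
  rw [le_inv_mul_iff₀ (hc n)]
  calc c n * ‖f n x‖ ^ 2 ≤ RCLike.re (g x) := le_hasSum hre n fun m _ => by positivity
    _ ≤ ‖g x‖ := RCLike.re_le_norm _

lemma iUnion_ne_univ_of_isPrimeIdeal (P : ℕ → Set C₀(Ω, 𝕜)) (hP : ∀ n, IsPrimeIdeal (P n)) :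
    ⋃ n, P n ≠ Set.univ := by
  intro hU
  choose f hf using fun n => Set.ne_univ_iff_exists_notMem _ |>.1 (hP n).2.1
  obtain ⟨g, hg⟩ := exists_forall_norm_sq_le_mul_norm f
  obtain ⟨m, hgm⟩ := Set.mem_iUnion.1 (hU ▸ Set.mem_univ g)
  obtain ⟨C, hC⟩ := hg m
  have hfm : ∀ x, ‖(f m * f m) x‖ ≤ C * ‖g x‖ := fun x => by simpa [sq] using hC x
  exact hf m ((hP m).mem_of_mul_self_mem (mem_of_norm_le_mul_norm (hP m) hgm hfm))

end ZeroAtInftyContinuousMap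

theorem union_pseudoFinite_primes_isPrime_general {Ω : Type*} [TopologicalSpace Ω]
    (P : ℕ → Set C₀(Ω, ℂ)) (hP : ∀ n, IsPrimeIdeal (P n))
    (hpf : PseudoFinite P) :
    IsPrimeIdeal (⋃ n, P n) :=
  isPrimeIdeal_iUnion_of_pseudoFinite hP hpf
    (ZeroAtInftyContinuousMap.iUnion_ne_univ_of_isPrimeIdeal P hP)

/-- The union of a pseudo-finite sequence of prime ideals in `C₀(Ω)` is a prime
ideal in `C₀(Ω)`. -/
theorem union_pseudoFinite_primes_isPrime {Ω : Type*} [TopologicalSpace Ω]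
    [LocallyCompactSpace Ω] [T2Space Ω]
    (P : ℕ → Set C₀(Ω, ℂ)) (hP : ∀ n, IsPrimeIdeal (P n))
    (hpf : PseudoFinite P) :
    IsPrimeIdeal (⋃ n, P n) :=
  union_pseudoFinite_primes_isPrime_general P hP hpf
end

section
/- Let Ω be a locally compact Hausdorff space and let 𝔔 be a compact family of prime ideals in C_0(Ω) (relatively compact and closed under unions of pseudo-finite sequences). Then every nonempty chain in 𝔔 (with respect to inclusion) has a smallest element; i.e., each chain in 𝔔 is well-ordered by inclusion. -/
/-!
A strictly decreasing sequence `P` of sets has no pseudo-finite subsequence `P ∘ φ`: an element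
of `P (φ 0) \ P (φ 1)` lies in the union but in none of the later terms. Hence a relatively compact
family is well-founded under strict inclusion, and in a chain a minimal element is the least one.
-/

open ZeroAtInfty

/-- A family of prime ideals is relatively compact if every sequence in the
family has a pseudo-finite subsequence. -/
def RelativelyCompactFamily {A : Type*} [NonUnitalCommRing A]
    (𝔓 : Set (Set A)) : Prop :=
  (∀ P ∈ 𝔓, IsPrimeIdeal P) ∧
    ∀ P : ℕ → Set A, (∀ n, P n ∈ 𝔓) →
      ∃ φ : ℕ → ℕ, StrictMono φ ∧ PseudoFinite (fun n => P (φ n))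

/-- A family of prime ideals is compact if it is relatively compact and
contains the union of each of its pseudo-finite sequences. -/
def CompactFamily {A : Type*} [NonUnitalCommRing A] (𝔔 : Set (Set A)) : Prop :=
  RelativelyCompactFamily 𝔔 ∧
    ∀ P : ℕ → Set A, (∀ n, P n ∈ 𝔔) → PseudoFinite P → (⋃ n, P n) ∈ 𝔔

theorem not_pseudoFinite_of_strictAnti {A : Type*} [NonUnitalCommRing A] {P : ℕ → Set A}
    (hP : StrictAnti P) : ¬ PseudoFinite P := by
  intro hpf
  obtain ⟨a, ha₀, ha₁⟩ := Set.exists_of_ssubset (hP zero_lt_one)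
  refine Set.Ici_infinite 1 ((hpf a ⟨0, ha₀⟩).subset fun n hn han => ?_)
  exact ha₁ (hP.antitone hn han)

theorem RelativelyCompactFamily.isWF {A : Type*} [NonUnitalCommRing A] {𝔓 : Set (Set A)}
    (h𝔓 : RelativelyCompactFamily 𝔓) : 𝔓.IsWF := by
  rw [Set.isWF_iff_no_descending_seq]
  intro P hP hP𝔓
  obtain ⟨φ, hφ, hpf⟩ := h𝔓.2 P hP𝔓
  exact not_pseudoFinite_of_strictAnti (hP.comp_strictMono hφ) hpf

theorem IsChain.exists_forall_le_of_isWF {α : Type*} [Preorder α] {s : Set α}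
    (hs : IsChain (· ≤ ·) s) (hwf : s.IsWF) (hne : s.Nonempty) : ∃ a ∈ s, ∀ b ∈ s, a ≤ b := by
  obtain ⟨a, ha⟩ := hwf.exists_minimal hne
  refine ⟨a, ha.prop, fun b hb => ?_⟩
  rcases hs.total ha.prop hb with hab | hba
  · exact hab
  · exact ha.le_of_le hb hba

theorem compactFamily_chain_wellOrdered_general {Ω : Type*} [TopologicalSpace Ω]
    (𝔔 : Set (Set C₀(Ω, ℂ))) (h𝔔 : CompactFamily 𝔔)
    (𝒞 : Set (Set C₀(Ω, ℂ))) (h𝒞 : 𝒞 ⊆ 𝔔) (hchain : IsChain (· ⊆ ·) 𝒞)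
    (hne : 𝒞.Nonempty) :
    ∃ Q ∈ 𝒞, ∀ Q' ∈ 𝒞, Q ⊆ Q' :=
  hchain.exists_forall_le_of_isWF (h𝔔.1.isWF.mono h𝒞) hne

/-- Every nonempty chain in a compact family `𝔔` of prime ideals in `C₀(Ω)`
has a smallest element; i.e., each chain in `𝔔` is well-ordered by inclusion. -/
theorem compactFamily_chain_wellOrdered {Ω : Type*} [TopologicalSpace Ω]
    [LocallyCompactSpace Ω] [T2Space Ω]
    (𝔔 : Set (Set C₀(Ω, ℂ))) (h𝔔 : CompactFamily 𝔔)
    (𝒞 : Set (Set C₀(Ω, ℂ))) (h𝒞 : 𝒞 ⊆ 𝔔) (hchain : IsChain (· ⊆ ·) 𝒞)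
    (hne : 𝒞.Nonempty) :
    ∃ Q ∈ 𝒞, ∀ Q' ∈ 𝒞, Q ⊆ Q' :=
  compactFamily_chain_wellOrdered_general 𝔔 h𝔔 𝒞 h𝒞 hchain hne
end

section
/- Let Ω be a locally compact Hausdorff space and 𝔔 a compact family of prime ideals in C_0(Ω). Then for each P ∈ 𝔔 there exists a ∈ C_0(Ω) with a ∉ P but a ∈ Q for all Q ∈ 𝔔 with Q ⊄ P. -/
open ZeroAtInfty

/-!
If no such `a` existed, every `x ∉ P` would lie outside
some `Q ∈ 𝔔` with `Q ⊄ P`; multiplying `x` by some `b ∈ Q \ P` gives `x * b ∉ P` (primality)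
with `x * b ∈ Q`. Iterating yields a chain `x₀ ∣ x₁ ∣ x₂ ∣ ⋯` and ideals `Qₙ ∈ 𝔔` with
`xₙ ∉ Qₙ` but `xₖ ∈ Qₙ` for `k > n`. Along any subsequence the element `x_{φ 1}` lies in
`Q_{φ 0}` yet in none of the `Q_{φ n}` with `n ≥ 1`, so no subsequence is pseudo-finite.
-/

section

variable {A : Type*} [NonUnitalCommRing A]

theorem IsIdeal.mem_of_dvd {I : Set A} (hI : IsIdeal I) {a b : A} (ha : a ∈ I) (hab : a ∣ b) :
    b ∈ I := by
  obtain ⟨c, rfl⟩ := hab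
  exact hI.2.2.2 a ha c

theorem IsPrimeIdeal.mul_notMem {P : Set A} (hP : IsPrimeIdeal P) {a b : A} (ha : a ∉ P)
    (hb : b ∉ P) : a * b ∉ P :=
  fun hab => (hP.2.2 a b hab).elim ha hb

theorem not_pseudoFinite_of_dvd_chain {Q : ℕ → Set A} (hQ : ∀ n, IsIdeal (Q n)) {x : ℕ → A}
    (hdvd : ∀ n, x n ∣ x (n + 1)) (hin : ∀ n, x (n + 1) ∈ Q n) (hout : ∀ n, x n ∉ Q n)
    {φ : ℕ → ℕ} (hφ : StrictMono φ) : ¬ PseudoFinite (fun n => Q (φ n)) := by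
  have mem_mono : ∀ {R : Set A}, IsIdeal R → Monotone (fun n => x n ∈ R) :=
    fun hR => monotone_nat_of_le_succ fun n h => hR.mem_of_dvd h (hdvd n)
  intro hpf
  have hmem₀ : x (φ 1) ∈ Q (φ 0) := mem_mono (hQ _) (hφ zero_lt_one) (hin (φ 0))
  have hfin := hpf (x (φ 1)) ⟨0, hmem₀⟩
  refine Set.Ici_infinite 1 (hfin.subset fun n (hn : 1 ≤ n) hmem => hout (φ n) ?_)
  exact mem_mono (hQ _) (hφ.monotone hn) hmem

theorem RelativelyCompactFamily.exists_notMem_forall_mem {𝔔 : Set (Set A)}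
    (h𝔔 : RelativelyCompactFamily 𝔔) {P : Set A} (hP : P ∈ 𝔔) :
    ∃ a : A, a ∉ P ∧ ∀ Q ∈ 𝔔, ¬ Q ⊆ P → a ∈ Q := by
  have hPprime := h𝔔.1 P hP
  obtain ⟨a₀, ha₀⟩ := (Set.ne_univ_iff_exists_notMem P).mp hPprime.2.1
  by_contra! hcon
  have step : ∀ x : {x // x ∉ P}, ∃ Q ∈ 𝔔, x.1 ∉ Q ∧ ∃ b ∈ Q, b ∉ P := fun x => by
    obtain ⟨Q, hQ, hQP, hxQ⟩ := hcon x.1 x.2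
    exact ⟨Q, hQ, hxQ, Set.not_subset.mp hQP⟩
  choose Q hQ hxQ b hbQ hbP using step
  let x : ℕ → {x // x ∉ P} := fun n =>
    Nat.rec ⟨a₀, ha₀⟩ (fun _ x => ⟨x.1 * b x, hPprime.mul_notMem x.2 (hbP x)⟩) n
  have hideal : ∀ n, IsIdeal (Q (x n)) := fun n => (h𝔔.1 _ (hQ _)).1
  obtain ⟨φ, hφ, hpf⟩ := h𝔔.2 (fun n => Q (x n)) (fun n => hQ _)
  exact not_pseudoFinite_of_dvd_chain hideal (x := fun n => (x n).1) (fun n => ⟨b (x n), rfl⟩)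
    (fun n => (hideal n).mem_of_dvd (hbQ _) (Dvd.intro_left _ rfl)) (fun n => hxQ (x n)) hφ hpf

end

theorem compactFamily_witness_general {Ω : Type*} [TopologicalSpace Ω]
    (𝔔 : Set (Set C₀(Ω, ℂ))) (h𝔔 : CompactFamily 𝔔)
    (P : Set C₀(Ω, ℂ)) (hP : P ∈ 𝔔) :
    ∃ a : C₀(Ω, ℂ), a ∉ P ∧ ∀ Q ∈ 𝔔, ¬ Q ⊆ P → a ∈ Q :=
  h𝔔.1.exists_notMem_forall_mem hP

/-- For each `P` in a compact family `𝔔` of prime ideals in `C₀(Ω)` there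
exists `a ∉ P` with `a ∈ Q` for all `Q ∈ 𝔔` not contained in `P`. -/
theorem compactFamily_witness {Ω : Type*} [TopologicalSpace Ω]
    [LocallyCompactSpace Ω] [T2Space Ω]
    (𝔔 : Set (Set C₀(Ω, ℂ))) (h𝔔 : CompactFamily 𝔔)
    (P : Set C₀(Ω, ℂ)) (hP : P ∈ 𝔔) :
    ∃ a : C₀(Ω, ℂ), a ∉ P ∧ ∀ Q ∈ 𝔔, ¬ Q ⊆ P → a ∈ Q :=
  compactFamily_witness_general 𝔔 h𝔔 P hP
end

section
/- Let Ω be a locally compact Hausdorff space and let 𝔔 be a compact family of prime ideals in C_0(Ω) having a unique maximal element Q. Set I = ⋂𝔔. Then for every a ∈ C_0(Ω) \ Q and every b ∈ Q there exists s ∈ Q such that as − b ∈ I. -/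
open ZeroAtInfty

/-!
Prime ideals of `C₀(Ω, ℂ)` are absolutely convex: if `f ∈ P` and `‖g‖ ≤ ‖f‖` pointwise, then
`g * g = f * (g² / f)` with `g² / f` again continuous and vanishing at infinity, so `g ∈ P`.

The divisor is the regularised quotient `s = b ā / max (|a|², |b|)`. Since `|s|² ≤ |b|`, `s ∈ Q`.
The difference `a s - b` vanishes where `|a|² ≥ |b|` and `v = (|a|² - |b|)⁺` vanishes elsewhere,
so `(a s - b) v = 0` lies in every `P ∈ 𝔔`. But `v ∉ P`: otherwise `v ∈ Q`, and with `|b| ∈ Q`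
the bound `|a|² ≤ v + |b|` would give `a ∈ Q`.
-/

open Filter Topology ComplexConjugate

namespace IsPrimeIdeal

variable {A : Type*} [NonUnitalCommRing A] {P : Set A}

lemma zero_mem (hP : IsPrimeIdeal P) : (0 : A) ∈ P := hP.1.1

lemma add_mem (hP : IsPrimeIdeal P) {a b : A} (ha : a ∈ P) (hb : b ∈ P) : a + b ∈ P :=
  hP.1.2.1 a ha b hb

lemma mul_mem_right (hP : IsPrimeIdeal P) {a : A} (b : A) (ha : a ∈ P) : a * b ∈ P :=
  hP.1.2.2.2 a ha b

lemma mem_or_mem (hP : IsPrimeIdeal P) {a b : A} (hab : a * b ∈ P) : a ∈ P ∨ b ∈ P :=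
  hP.2.2 a b hab

lemma mem_of_mul_self_mem_s16 (hP : IsPrimeIdeal P) {a : A} (ha : a * a ∈ P) : a ∈ P :=
  (hP.mem_or_mem ha).elim id id

end IsPrimeIdeal

namespace ZeroAtInftyContinuousMap

variable {α β γ : Type*} [TopologicalSpace α] [TopologicalSpace β] [Zero β]
  [TopologicalSpace γ] [Zero γ]

def map (F : β → γ) (hF : Continuous F) (hF0 : F 0 = 0) (f : C₀(α, β)) : C₀(α, γ) where
  toFun x := F (f x)
  continuous_toFun := hF.comp f.continuous
  zero_at_infty' := by simpa [Function.comp_def, hF0] using (hF.tendsto 0).comp f.zero_at_infty'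

lemma map_apply (F : β → γ) (hF : Continuous F) (hF0 : F 0 = 0) (f : C₀(α, β)) (x : α) :
    map F hF hF0 f x = F (f x) := rfl

def prodMk (f : C₀(α, β)) (g : C₀(α, γ)) : C₀(α, β × γ) where
  toFun x := (f x, g x)
  continuous_toFun := f.continuous.prodMk g.continuous
  zero_at_infty' := f.zero_at_infty'.prodMk_nhds g.zero_at_infty'

end ZeroAtInftyContinuousMap

open ZeroAtInftyContinuousMap

-- `w / z` wherever `‖w‖ ≤ ‖z‖ ^ 2`, tamed elsewhere so as to be continuous on `ℂ × ℂ`.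
noncomputable def regDiv (w z : ℂ) : ℂ := w * conj z / (max (‖z‖ ^ 2) ‖w‖ : ℝ)

lemma norm_regDiv (w z : ℂ) : ‖regDiv w z‖ = ‖w‖ * ‖z‖ / max (‖z‖ ^ 2) ‖w‖ := by
  rw [regDiv, norm_div, norm_mul, RCLike.norm_conj,
    Complex.norm_of_nonneg (le_max_of_le_right (norm_nonneg w))]

lemma norm_regDiv_le (w z : ℂ) : ‖regDiv w z‖ ≤ ‖z‖ := by
  rw [norm_regDiv]
  exact div_le_of_le_mul₀ (le_max_of_le_right (norm_nonneg w)) (norm_nonneg z)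
    (by rw [mul_comm]; gcongr; exact le_max_right _ _)

lemma norm_regDiv_sq_le (w z : ℂ) : ‖regDiv w z‖ ^ 2 ≤ ‖w‖ := by
  have hM : 0 ≤ max (‖z‖ ^ 2) ‖w‖ := le_max_of_le_right (norm_nonneg w)
  rw [norm_regDiv, div_pow]
  refine div_le_of_le_mul₀ (by positivity) (norm_nonneg w) ?_
  calc (‖w‖ * ‖z‖) ^ 2 = ‖w‖ * ‖z‖ ^ 2 * ‖w‖ := by ring
    _ ≤ ‖w‖ * max (‖z‖ ^ 2) ‖w‖ * max (‖z‖ ^ 2) ‖w‖ := by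
      gcongr
      exacts [le_max_left _ _, le_max_right _ _]
    _ = ‖w‖ * max (‖z‖ ^ 2) ‖w‖ ^ 2 := by ring

lemma mul_regDiv_of_norm_le {w z : ℂ} (h : ‖w‖ ≤ ‖z‖ ^ 2) : z * regDiv w z = w := by
  rcases eq_or_ne z 0 with rfl | hz
  · simp_all
  have hz2 : (‖z‖ ^ 2 : ℝ) ≠ 0 := by positivity
  rw [regDiv, max_eq_left h, mul_div_assoc', mul_left_comm, Complex.mul_conj,
    Complex.normSq_eq_norm_sq, Complex.ofReal_pow, mul_div_assoc, div_self (by exact_mod_cast hz2),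
    mul_one]

lemma regDiv_zero_zero : regDiv 0 0 = 0 := by simp [regDiv]

lemma continuous_regDiv : Continuous (Function.uncurry regDiv) := by
  rw [continuous_iff_continuousAt]
  rintro ⟨w, z⟩
  by_cases hM : max (‖z‖ ^ 2) ‖w‖ = 0
  · have hz : ‖z‖ ^ 2 = 0 := le_antisymm (hM ▸ le_max_left _ _) (by positivity)
    have hw : ‖w‖ = 0 := le_antisymm (hM ▸ le_max_right _ _) (norm_nonneg w)
    obtain rfl : z = 0 := by simpa using hz
    obtain rfl : w = 0 := norm_eq_zero.mp hw
    have : Tendsto (fun p : ℂ × ℂ => ‖p.2‖) (𝓝 0) (𝓝 0) := by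
      simpa using continuous_snd.norm.tendsto (0 : ℂ × ℂ)
    rw [ContinuousAt, Function.uncurry_apply_pair, regDiv_zero_zero]
    exact squeeze_zero_norm (fun p => norm_regDiv_le p.1 p.2) this
  · unfold Function.uncurry regDiv
    fun_prop (disch := exact_mod_cast hM)

section

variable {Ω : Type*} [TopologicalSpace Ω]

noncomputable def regQuot (b a : C₀(Ω, ℂ)) : C₀(Ω, ℂ) :=
  map (Function.uncurry regDiv) continuous_regDiv regDiv_zero_zero (prodMk b a)

lemma regQuot_apply (b a : C₀(Ω, ℂ)) (x : Ω) : regQuot b a x = regDiv (b x) (a x) := rfl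

theorem exists_mul_self_eq_mul_of_norm_le {f g : C₀(Ω, ℂ)} (h : ∀ x, ‖g x‖ ≤ ‖f x‖) :
    ∃ k : C₀(Ω, ℂ), g * g = f * k :=
  ⟨regQuot (g * g) f, ZeroAtInftyContinuousMap.ext fun x =>
    (mul_regDiv_of_norm_le (by rw [mul_apply, norm_mul, ← sq]; gcongr; exact h x)).symm⟩

theorem IsPrimeIdeal.mem_of_norm_le {P : Set C₀(Ω, ℂ)} (hP : IsPrimeIdeal P) {f g : C₀(Ω, ℂ)}
    (hf : f ∈ P) (h : ∀ x, ‖g x‖ ≤ ‖f x‖) : g ∈ P := by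
  obtain ⟨k, hk⟩ := exists_mul_self_eq_mul_of_norm_le h
  exact hP.mem_of_mul_self_mem_s16 (hk ▸ hP.mul_mem_right k hf)

noncomputable def sqNormExcess (a b : C₀(Ω, ℂ)) : C₀(Ω, ℂ) :=
  map (fun p : ℂ × ℂ => ((max (‖p.1‖ ^ 2 - ‖p.2‖) 0 : ℝ) : ℂ)) (by fun_prop) (by simp)
    (prodMk a b)

lemma sqNormExcess_apply (a b : C₀(Ω, ℂ)) (x : Ω) :
    sqNormExcess a b x = ((max (‖a x‖ ^ 2 - ‖b x‖) 0 : ℝ) : ℂ) := rfl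

lemma regQuot_mem {Q : Set C₀(Ω, ℂ)} (hQ : IsPrimeIdeal Q) (a : C₀(Ω, ℂ)) {b : C₀(Ω, ℂ)}
    (hb : b ∈ Q) : regQuot b a ∈ Q :=
  hQ.mem_of_mul_self_mem_s16 <| hQ.mem_of_norm_le hb fun x => by
    rw [mul_apply, norm_mul, ← sq, regQuot_apply]
    exact norm_regDiv_sq_le (b x) (a x)

lemma mul_regQuot_sub_mul_sqNormExcess (a b : C₀(Ω, ℂ)) :
    (a * regQuot b a - b) * sqNormExcess a b = 0 := by
  ext x
  rw [mul_apply, ZeroAtInftyContinuousMap.sub_apply, mul_apply, regQuot_apply, sqNormExcess_apply,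
    ZeroAtInftyContinuousMap.zero_apply]
  rcases le_total ‖b x‖ (‖a x‖ ^ 2) with h | h
  · rw [mul_regDiv_of_norm_le h, sub_self, zero_mul]
  · rw [max_eq_right (sub_nonpos.mpr h), Complex.ofReal_zero, mul_zero]

lemma mem_of_sqNormExcess_mem {Q : Set C₀(Ω, ℂ)} (hQ : IsPrimeIdeal Q) {a b : C₀(Ω, ℂ)}
    (hb : b ∈ Q) (hv : sqNormExcess a b ∈ Q) : a ∈ Q := by
  have hnb : map (fun w : ℂ => ((‖w‖ : ℝ) : ℂ)) (by fun_prop) (by simp) b ∈ Q :=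
    hQ.mem_of_norm_le hb fun x => by simp [map_apply]
  refine hQ.mem_of_mul_self_mem_s16 (hQ.mem_of_norm_le (hQ.add_mem hv hnb) fun x => ?_)
  change ‖a x * a x‖ ≤ ‖((max (‖a x‖ ^ 2 - ‖b x‖) 0 : ℝ) : ℂ) + ((‖b x‖ : ℝ) : ℂ)‖
  rw [← Complex.ofReal_add, Complex.norm_of_nonneg (by positivity), norm_mul, ← sq]
  linarith [le_max_left (‖a x‖ ^ 2 - ‖b x‖) 0]

theorem exists_mul_sub_mem_sInter {𝔔 : Set (Set C₀(Ω, ℂ))} (h𝔔 : ∀ P ∈ 𝔔, IsPrimeIdeal P)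
    {Q : Set C₀(Ω, ℂ)} (hQ : IsPrimeIdeal Q) (hmax : ∀ P ∈ 𝔔, P ⊆ Q) {a b : C₀(Ω, ℂ)}
    (ha : a ∉ Q) (hb : b ∈ Q) : ∃ s ∈ Q, a * s - b ∈ ⋂₀ 𝔔 := by
  refine ⟨regQuot b a, regQuot_mem hQ a hb, Set.mem_sInter.mpr fun P hP => ?_⟩
  have hzero := mul_regQuot_sub_mul_sqNormExcess a b ▸ (h𝔔 P hP).zero_mem
  exact ((h𝔔 P hP).mem_or_mem hzero).resolve_right fun hv =>
    ha (mem_of_sqNormExcess_mem hQ hb (hmax P hP hv))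

end

theorem compactFamily_divisibility_general {Ω : Type*} [TopologicalSpace Ω]
    (𝔔 : Set (Set C₀(Ω, ℂ))) (h𝔔 : CompactFamily 𝔔)
    (Q : Set C₀(Ω, ℂ)) (hQ : Q ∈ 𝔔) (hmax : ∀ P ∈ 𝔔, P ⊆ Q)
    (a b : C₀(Ω, ℂ)) (ha : a ∉ Q) (hb : b ∈ Q) :
    ∃ s ∈ Q, a * s - b ∈ ⋂₀ 𝔔 :=
  exists_mul_sub_mem_sInter h𝔔.1.1 (h𝔔.1.1 Q hQ) hmax ha hb

/-- Let `𝔔` be a compact family of prime ideals in `C₀(Ω)` with a unique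
maximal element `Q`, and set `I = ⋂ 𝔔`. Then for every `a ∉ Q` and `b ∈ Q`
there exists `s ∈ Q` with `a * s - b ∈ I`. -/
theorem compactFamily_divisibility {Ω : Type*} [TopologicalSpace Ω]
    [LocallyCompactSpace Ω] [T2Space Ω]
    (𝔔 : Set (Set C₀(Ω, ℂ))) (h𝔔 : CompactFamily 𝔔) (hne : 𝔔.Nonempty)
    (Q : Set C₀(Ω, ℂ)) (hQ : Q ∈ 𝔔) (hmax : ∀ P ∈ 𝔔, P ⊆ Q)
    (a b : C₀(Ω, ℂ)) (ha : a ∉ Q) (hb : b ∈ Q) :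
    ∃ s ∈ Q, a * s - b ∈ ⋂₀ 𝔔 :=
  compactFamily_divisibility_general 𝔔 h𝔔 Q hQ hmax a b ha hb
end
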